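/- arXiv:2012.03567 — 6 statements merged into one kernel-verified Lean document; each statement's English description precedes it below -/
import Mathlib

section
/- If t is a finite rooted tree in which every internal node has at most 2 children and the dimension of t (as defined) is 1, then the number of leaves of t is at most the height of t plus 1. -/
/-- A finite rooted tree in which every internal node has at most 2 children. -/
inductive Tree012 where
  | leaf : Tree012
  | node1 : Tree012 → Tree012
  | node2 : Tree012 → Tree012 → Tree012

namespace Tree012

/-- Dimension: 0 for a leaf; for a unary node, the child's dimension (unique maximum);
for a binary node, the max of the children's dimensions if it is uniquely attained,
otherwise that maximum plus one. -/
def dim : Tree012 → ℕ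
  | leaf => 0
  | node1 c => dim c
  | node2 l r => if dim l = dim r then dim l + 1 else max (dim l) (dim r)

/-- Height: maximum number of edges on a root-to-leaf path. -/
def height : Tree012 → ℕ
  | leaf => 0
  | node1 c => height c + 1
  | node2 l r => max (height l) (height r) + 1

/-- Number of leaves. -/
def leaves : Tree012 → ℕ
  | leaf => 1
  | node1 c => leaves c
  | node2 l r => leaves l + leaves r

end Tree012

open Tree012 in
lemma dim_zero_leaves (t : Tree012) (h : t.dim = 0) : t.leaves = 1 := by
  induction t with
  | leaf => rfl
  | node1 c ih => exact ih h
  | node2 l r ihl ihr =>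
    simp only [dim] at h
    split at h
    · omega
    · have := Nat.max_eq_zero_iff.mp h
      omega

open Tree012 in
lemma dim_le_one (t : Tree012) (h : t.dim ≤ 1) : t.leaves ≤ t.height + 1 := by
  induction t with
  | leaf => simp [leaves, height]
  | node1 c ih =>
    rw [dim] at h; rw [leaves, height]
    exact le_trans (ih h) (by omega)
  | node2 l r ihl ihr =>
    rw [dim] at h; rw [leaves, height]
    split at h
    · have hl : l.dim = 0 := by omega
      have hr : r.dim = 0 := by omega
      rw [dim_zero_leaves l hl, dim_zero_leaves r hr]; omega
    · rcases le_or_gt l.dim r.dim with hc | hc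
      · have hl : l.dim = 0 := by omega
        rw [dim_zero_leaves l hl]
        have := ihr (by omega)
        omega
      · have hr : r.dim = 0 := by omega
        rw [dim_zero_leaves r hr]
        have := ihl (by omega)
        omega

theorem dimension_one_leaves_le_height_succ (t : Tree012) (h : t.dim = 1) :
    t.leaves ≤ t.height + 1 := dim_le_one t (by omega)
end

section
/- For every d ≥ 0 there is a constant C_d such that every finite rooted binary tree (each internal node has exactly 2 children) of height h and dimension at most d has at most C_d · (h+1)^d leaves. Equivalently, the number of leaves of a binary tree of height h and dimension ≤ d is O(h^d). -/
/-- A finite rooted binary tree: every internal node has exactly 2 children. -/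
inductive BTree where
  | leaf : BTree
  | node : BTree → BTree → BTree

namespace BTree

/-- Dimension: dim(leaf) = 0; for an internal node with children u, v,
dim = max(dim u, dim v) if they differ, else dim u + 1. -/
def dim : BTree → ℕ
  | leaf => 0
  | node l r => if dim l = dim r then dim l + 1 else max (dim l) (dim r)

/-- Height: maximum number of edges on a root-to-leaf path. -/
def height : BTree → ℕ
  | leaf => 0
  | node l r => max (height l) (height r) + 1

/-- Number of leaves. -/
def leaves : BTree → ℕ
  | leaf => 1
  | node l r => leaves l + leaves r

end BTree

private lemma key_ineq (H n : ℕ) : H ^ (n + 1) + H ^ n ≤ (H + 1) ^ (n + 1) := by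
  calc H ^ (n + 1) + H ^ n = H ^ n * (H + 1) := by ring
    _ ≤ (H + 1) ^ n * (H + 1) := by
        exact Nat.mul_le_mul_right _ (Nat.pow_le_pow_left (Nat.le_succ H) n)
    _ = (H + 1) ^ (n + 1) := by ring

private lemma leaves_le : ∀ t : BTree, t.leaves ≤ (t.height + 1) ^ t.dim := by
  intro t
  induction t with
  | leaf => simp [BTree.leaves, BTree.height, BTree.dim]
  | node l r ihl ihr =>
    have hH : l.height + 1 ≤ max l.height r.height + 1 := by omega
    have hH' : r.height + 1 ≤ max l.height r.height + 1 := by omega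
    set H := max l.height r.height + 1 with hHdef
    have hH1 : 1 ≤ H := by omega
    have hheight : (BTree.node l r).height = H := rfl
    have hLl : l.leaves ≤ H ^ l.dim :=
      ihl.trans (Nat.pow_le_pow_left hH _)
    have hLr : r.leaves ≤ H ^ r.dim :=
      ihr.trans (Nat.pow_le_pow_left hH' _)
    have hleaves : (BTree.node l r).leaves = l.leaves + r.leaves := rfl
    by_cases hd : l.dim = r.dim
    · have hdim : (BTree.node l r).dim = l.dim + 1 := by
        simp [BTree.dim, hd]
      rw [hleaves, hdim, hheight]
      calc l.leaves + r.leaves ≤ H ^ l.dim + H ^ r.dim :=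
            Nat.add_le_add hLl hLr
        _ = H ^ l.dim + H ^ l.dim := by rw [hd]
        _ ≤ H ^ (l.dim + 1) + H ^ l.dim := by
            have : H ^ l.dim ≤ H ^ (l.dim + 1) :=
              Nat.pow_le_pow_right hH1 (by omega)
            omega
        _ ≤ (H + 1) ^ (l.dim + 1) := key_ineq H l.dim
    · have hdim : (BTree.node l r).dim = max l.dim r.dim := by
        simp [BTree.dim, hd]
      rw [hleaves, hdim, hheight]
      rcases Nat.lt_or_ge l.dim r.dim with hlt | hge
      · -- r.dim bigger
        obtain ⟨m, hm⟩ : ∃ m, r.dim = m + 1 := ⟨r.dim - 1, by omega⟩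
        have hmax : max l.dim r.dim = m + 1 := by omega
        rw [hmax]
        have h1 : l.leaves ≤ H ^ m :=
          hLl.trans (Nat.pow_le_pow_right hH1 (by omega))
        have h2 : r.leaves ≤ H ^ (m + 1) := by rw [hm] at hLr; exact hLr
        calc l.leaves + r.leaves ≤ H ^ (m + 1) + H ^ m := by omega
          _ ≤ (H + 1) ^ (m + 1) := key_ineq H m
      · have hlt : r.dim < l.dim := by omega
        obtain ⟨m, hm⟩ : ∃ m, l.dim = m + 1 := ⟨l.dim - 1, by omega⟩
        have hmax : max l.dim r.dim = m + 1 := by omega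
        rw [hmax]
        have h1 : r.leaves ≤ H ^ m :=
          hLr.trans (Nat.pow_le_pow_right hH1 (by omega))
        have h2 : l.leaves ≤ H ^ (m + 1) := by rw [hm] at hLl; exact hLl
        calc l.leaves + r.leaves ≤ H ^ (m + 1) + H ^ m := by omega
          _ ≤ (H + 1) ^ (m + 1) := key_ineq H m

theorem leaves_bigO_height_pow_dim (d : ℕ) :
    ∃ C : ℕ, ∀ t : BTree, t.dim ≤ d → t.leaves ≤ C * (t.height + 1) ^ d := by
  refine ⟨1, fun t hd => ?_⟩
  rw [one_mul]
  exact (leaves_le t).trans (Nat.pow_le_pow_right (by omega) hd)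
end

section
/- Every finite rooted binary tree of dimension at most d and height h has at most (h+1)^d + 1 leaves (for d ≥ 1). -/
open Finset

lemma sum_choose_succ (n d : ℕ) :
    ∑ i ∈ range (d + 2), (n + 1).choose i
      = ∑ i ∈ range (d + 2), n.choose i + ∑ i ∈ range (d + 1), n.choose i := by
  induction d with
  | zero => simp [Finset.sum_range_succ, Nat.choose]; omega
  | succ d ih =>
    rw [Finset.sum_range_succ, ih, Nat.choose_succ_succ,
      Finset.sum_range_succ (n := d + 2), Finset.sum_range_succ (n := d + 1)]
    ring

lemma sum_choose_mono {m n d e : ℕ} (hmn : m ≤ n) (hde : d ≤ e) :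
    ∑ i ∈ range d, m.choose i ≤ ∑ i ∈ range e, n.choose i :=
  (Finset.sum_le_sum fun i _ => Nat.choose_le_choose i hmn).trans
    (Finset.sum_le_sum_of_subset (Finset.range_subset_range.2 hde))

lemma leaves_le_sum_choose (t : BTree) :
    t.leaves ≤ ∑ i ∈ range (t.dim + 1), (t.height).choose i := by
  induction t with
  | leaf => simp [BTree.leaves, BTree.dim, BTree.height]
  | node l r ihl ihr =>
    have hl : l.height ≤ max l.height r.height := le_max_left _ _
    have hr : r.height ≤ max l.height r.height := le_max_right _ _
    set n := max l.height r.height with hn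
    have hh : (BTree.node l r).height = n + 1 := rfl
    show l.leaves + r.leaves ≤ _
    rw [hh]
    rcases eq_or_ne l.dim r.dim with h | h
    · have hdim : (BTree.node l r).dim = l.dim + 1 := by simp [BTree.dim, h]
      rw [hdim, sum_choose_succ]
      exact Nat.add_le_add (ihl.trans (sum_choose_mono hl (by omega)))
        (ihr.trans (by rw [← h]; exact sum_choose_mono hr le_rfl))
    · have hdim : (BTree.node l r).dim = max l.dim r.dim := by simp [BTree.dim, h]
      rw [hdim]
      rcases lt_or_gt_of_ne h with hlt | hlt
      · have hm : max l.dim r.dim = r.dim := max_eq_right hlt.le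
        obtain ⟨e, he⟩ : ∃ e, r.dim = e + 1 := ⟨r.dim - 1, by omega⟩
        rw [hm, he, sum_choose_succ]
        have h1 : l.leaves ≤ ∑ i ∈ range (e + 1), n.choose i :=
          ihl.trans (sum_choose_mono hl (by omega))
        have h2 : r.leaves ≤ ∑ i ∈ range (e + 2), n.choose i :=
          ihr.trans (sum_choose_mono hr (by omega))
        omega
      · have hm : max l.dim r.dim = l.dim := max_eq_left hlt.le
        obtain ⟨e, he⟩ : ∃ e, l.dim = e + 1 := ⟨l.dim - 1, by omega⟩
        rw [hm, he, sum_choose_succ]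
        have h1 : r.leaves ≤ ∑ i ∈ range (e + 1), n.choose i :=
          ihr.trans (sum_choose_mono hr (by omega))
        have h2 : l.leaves ≤ ∑ i ∈ range (e + 2), n.choose i :=
          ihl.trans (sum_choose_mono hl (by omega))
        omega

lemma sum_choose_le_pow (h : ℕ) : ∀ d, 1 ≤ d →
    ∑ i ∈ range (d + 1), h.choose i ≤ (h + 1) ^ d := by
  intro d hd
  induction d, hd using Nat.le_induction with
  | base => simp [Finset.sum_range_succ]; omega
  | succ d hd ih =>
    rw [Finset.sum_range_succ]
    have h1 : h.choose (d + 1) ≤ h ^ (d + 1) := Nat.choose_le_pow _ _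
    have h2 : h ^ (d + 1) ≤ (h + 1) ^ d * h := by
      rw [pow_succ]
      exact Nat.mul_le_mul_right h (Nat.pow_le_pow_left (by omega) d)
    have h3 : (h + 1) ^ (d + 1) = (h + 1) ^ d * h + (h + 1) ^ d := by ring
    omega

theorem leaves_le_height_pow_dim_add_one (d : ℕ) (hd : 1 ≤ d) (t : BTree)
    (ht : t.dim ≤ d) : t.leaves ≤ (t.height + 1) ^ d + 1 := by
  calc t.leaves ≤ ∑ i ∈ range (t.dim + 1), (t.height).choose i := leaves_le_sum_choose t
    _ ≤ ∑ i ∈ range (d + 1), (t.height).choose i := sum_choose_mono le_rfl (by omega)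
    _ ≤ (t.height + 1) ^ d := sum_choose_le_pow _ d hd
    _ ≤ (t.height + 1) ^ d + 1 := Nat.le_succ _
end

section
/- The dimension of a finite rooted binary tree t equals the largest k such that the perfect binary tree of height k can be obtained from t by edge contractions; in particular, if t has dimension d, then t contains a topological minor that is a perfect binary tree of height d. -/
namespace BTree

/-- `contractsToPerfect k t` holds iff the perfect binary tree of height `k`
can be obtained from `t` by edge contractions (equivalently, `t` contains the
perfect binary tree of height `k` as a topological minor rooted anywhere below the root). -/
def contractsToPerfect : ℕ → BTree → Prop
  | 0, _ => True
  | _ + 1, leaf => False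
  | k + 1, node l r =>
      contractsToPerfect (k + 1) l ∨ contractsToPerfect (k + 1) r ∨
        (contractsToPerfect k l ∧ contractsToPerfect k r)

end BTree

namespace BTree

theorem cP_dim (t : BTree) : contractsToPerfect t.dim t := by
  induction t with
  | leaf => trivial
  | node l r ihl ihr =>
    simp only [dim]
    split
    · rename_i h
      exact Or.inr (Or.inr ⟨ihl, h ▸ ihr⟩)
    · rename_i h
      rcases Nat.lt_or_ge l.dim r.dim with hlt | hge
      · rw [Nat.max_eq_right hlt.le]
        cases hr : r.dim with
        | zero => trivial
        | succ k => exact Or.inr (Or.inl (hr ▸ ihr))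
      · rw [Nat.max_eq_left hge]
        cases hl : l.dim with
        | zero => trivial
        | succ k => exact Or.inl (hl ▸ ihl)

theorem cP_le (t : BTree) : ∀ k, contractsToPerfect k t → k ≤ t.dim := by
  induction t with
  | leaf => intro k hk; cases k with
    | zero => exact Nat.le_refl 0
    | succ k => exact absurd hk (by simp [contractsToPerfect])
  | node l r ihl ihr =>
    intro k hk
    cases k with
    | zero => exact Nat.zero_le _
    | succ k =>
      simp only [dim]
      rcases hk with h | h | ⟨h1, h2⟩
      · have := ihl _ h
        split
        · omega
        · exact this.trans (Nat.le_max_left _ _)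
      · have := ihr _ h
        split
        · rename_i he; omega
        · exact this.trans (Nat.le_max_right _ _)
      · have a := ihl _ h1
        have b := ihr _ h2
        split
        · omega
        · rename_i he
          rcases Nat.lt_or_ge l.dim r.dim with hlt | hge
          · rw [Nat.max_eq_right hlt.le]; omega
          · rw [Nat.max_eq_left hge]; omega

end BTree

theorem dim_eq_greatest_contractible_perfect_height (t : BTree) :
    BTree.contractsToPerfect t.dim t ∧
      ∀ k : ℕ, BTree.contractsToPerfect k t → k ≤ t.dim := ⟨BTree.cP_dim t, BTree.cP_le t⟩
end

section
/- Let G be a context-free grammar in Chomsky normal form with nonterminal set N, and let D be a finite automaton (directed labeled graph) with n states where every state is both initial and final. If w is a shortest word in L(G) ∩ L(D) (assumed nonempty), then every parse tree of w in G has height at most |N|·n². -/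
/-- A context-free grammar in Chomsky normal form (ignoring the rule `S → ε`):
rules are `A → BC` and `A → a`. -/
structure CNF (T N : Type) where
  start : N
  binRule : N → N → N → Prop   -- A → B C
  termRule : N → T → Prop      -- A → a

/-- Parse trees of a grammar in Chomsky normal form. -/
inductive DTree (T N : Type) where
  | leaf : N → T → DTree T N
  | node : N → DTree T N → DTree T N → DTree T N

namespace DTree

variable {T N : Type}

/-- Nonterminal at the root. -/
def rootN : DTree T N → N
  | leaf A _ => A
  | node A _ _ => A

/-- The terminal word at the leaves. -/
def yield : DTree T N → List T
  | leaf _ a => [a]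
  | node _ l r => yield l ++ yield r

/-- Height: number of edges on a longest root-to-leaf path. -/
def height : DTree T N → ℕ
  | leaf _ _ => 0
  | node _ l r => max (height l) (height r) + 1

/-- Dimension: leaves have dimension 0; an internal node has the maximum of its
children's dimensions if uniquely attained, else that maximum plus one. -/
def dim : DTree T N → ℕ
  | leaf _ _ => 0
  | node _ l r => if dim l = dim r then dim l + 1 else max (dim l) (dim r)

/-- A tree is a valid parse tree with respect to the grammar `g`. -/
def wf (g : CNF T N) : DTree T N → Prop
  | leaf A a => g.termRule A a
  | node A l r => g.binRule A (rootN l) (rootN r) ∧ wf g l ∧ wf g r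

end DTree

/-- `A` derives the terminal word `w` in `g`. -/
def CNF.Derives (g : CNF T N) (A : N) (w : List T) : Prop :=
  ∃ t : DTree T N, t.wf g ∧ t.rootN = A ∧ t.yield = w

/-- The language generated by the grammar. -/
def CNF.Lang (g : CNF T N) : Set (List T) := {w | g.Derives g.start w}

/-- `GWord δ i w j`: there is a path from state `i` to state `j` labeled by `w`
in the labeled transition relation `δ`. -/
def GWord {Q T : Type} (δ : Q → T → Q → Prop) : Q → List T → Q → Prop
  | i, [], j => i = j
  | i, a :: w, j => ∃ k, δ i a k ∧ GWord δ k w j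

/-- The language of a directed labeled graph in which every node is both
initial and final: labels of all paths. -/
def GraphLang {Q T : Type} (δ : Q → T → Q → Prop) : Set (List T) :=
  {w | ∃ i j : Q, GWord δ i w j}

lemma gword_append {Q T : Type} (δ : Q → T → Q → Prop) :
    ∀ (u : List T) (v : List T) (p q : Q),
      GWord δ p (u ++ v) q ↔ ∃ m, GWord δ p u m ∧ GWord δ m v q := by
  intro u
  induction u with
  | nil =>
    intro v p q
    constructor
    · intro h; exact ⟨p, rfl, h⟩
    · rintro ⟨m, hm, h⟩; cases hm; exact h
  | cons a u ih =>
    intro v p q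
    constructor
    · rintro ⟨k, hk, h⟩
      obtain ⟨m, h1, h2⟩ := (ih v k q).mp h
      exact ⟨m, ⟨k, hk, h1⟩, h2⟩
    · rintro ⟨m, ⟨k, hk, h1⟩, h2⟩
      exact ⟨k, hk, (ih v k q).mpr ⟨m, h1, h2⟩⟩

lemma yield_ne_nil {T N : Type} : ∀ t : DTree T N, 1 ≤ t.yield.length := by
  intro t
  induction t with
  | leaf A a => simp [DTree.yield]
  | node A l r ihl ihr => simp [DTree.yield]; omega

lemma key_lemma {T N Q : Type} (g : CNF T N) (δ : Q → T → Q → Prop) (w : List T)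
    (hmin : ∀ w' ∈ g.Lang ∩ GraphLang δ, w.length ≤ w'.length) :
    ∀ t : DTree T N, ∀ p q : Q, t.wf g → GWord δ p t.yield q →
    ∀ k : ℕ, k + t.yield.length = w.length →
    (∀ s' : DTree T N, s'.wf g → s'.rootN = t.rootN → GWord δ p s'.yield q →
      ∃ w' ∈ g.Lang ∩ GraphLang δ, w'.length = k + s'.yield.length) →
    ∃ L : List (N × Q × Q), L.length = t.height + 1 ∧ L.Nodup ∧
      ∀ x ∈ L, ∃ s : DTree T N, s.wf g ∧ s.rootN = x.1 ∧
        GWord δ x.2.1 s.yield x.2.2 ∧ s.yield.length ≤ t.yield.length := by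
  intro t
  induction t with
  | leaf A a =>
    intro p q hwf hg k hk hctx
    refine ⟨[(A, p, q)], rfl, List.nodup_singleton _, ?_⟩
    rintro x hx
    simp at hx
    subst hx
    exact ⟨DTree.leaf A a, hwf, rfl, hg, le_refl _⟩
  | node A l r ihl ihr =>
    intro p q hwf hg k hk hctx
    obtain ⟨hbin, hwl, hwr⟩ := hwf
    obtain ⟨m, hgl, hgr⟩ := (gword_append δ l.yield r.yield p q).mp hg
    have hylen : (DTree.node A l r).yield.length = l.yield.length + r.yield.length := by
      simp [DTree.yield]
    have hl1 := yield_ne_nil l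
    have hr1 := yield_ne_nil r
    by_cases hcase : r.height ≤ l.height
    · -- recurse into the left child
      have hctx' : ∀ s' : DTree T N, s'.wf g → s'.rootN = l.rootN → GWord δ p s'.yield m →
          ∃ w' ∈ g.Lang ∩ GraphLang δ, w'.length = (k + r.yield.length) + s'.yield.length := by
        intro s' hs'wf hs'root hs'g
        have := hctx (DTree.node A s' r)
          ⟨by rw [hs'root]; exact hbin, hs'wf, hwr⟩ rfl
          ((gword_append δ s'.yield r.yield p q).mpr ⟨m, hs'g, hgr⟩)
        obtain ⟨w', hw', hlen⟩ := this
        refine ⟨w', hw', ?_⟩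
        rw [hlen]
        simp [DTree.yield]
        omega
      obtain ⟨L, hLlen, hLnd, hLmem⟩ := ihl p m hwl hgl (k + r.yield.length)
        (by rw [hylen] at hk; omega) hctx'
      refine ⟨(A, p, q) :: L, ?_, ?_, ?_⟩
      · simp [hLlen, DTree.height, Nat.max_eq_left hcase]
      · refine List.nodup_cons.mpr ⟨?_, hLnd⟩
        intro hin
        obtain ⟨s, hswf, hsroot, hsg, hslen⟩ := hLmem _ hin
        obtain ⟨w', hw', hlen⟩ := hctx s hswf hsroot hsg
        have := hmin w' hw'
        rw [hylen] at hk
        omega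
      · rintro x hx
        rcases List.mem_cons.mp hx with h | h
        · subst h
          exact ⟨DTree.node A l r, ⟨hbin, hwl, hwr⟩, rfl,
            (gword_append δ l.yield r.yield p q).mpr ⟨m, hgl, hgr⟩, le_refl _⟩
        · obtain ⟨s, h1, h2, h3, h4⟩ := hLmem _ h
          exact ⟨s, h1, h2, h3, by rw [hylen]; omega⟩
    · -- recurse into the right child
      have hctx' : ∀ s' : DTree T N, s'.wf g → s'.rootN = r.rootN → GWord δ m s'.yield q →
          ∃ w' ∈ g.Lang ∩ GraphLang δ, w'.length = (k + l.yield.length) + s'.yield.length := by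
        intro s' hs'wf hs'root hs'g
        have := hctx (DTree.node A l s')
          ⟨by rw [hs'root]; exact hbin, hwl, hs'wf⟩ rfl
          ((gword_append δ l.yield s'.yield p q).mpr ⟨m, hgl, hs'g⟩)
        obtain ⟨w', hw', hlen⟩ := this
        refine ⟨w', hw', ?_⟩
        rw [hlen]
        simp [DTree.yield]
        omega
      obtain ⟨L, hLlen, hLnd, hLmem⟩ := ihr m q hwr hgr (k + l.yield.length)
        (by rw [hylen] at hk; omega) hctx'
      refine ⟨(A, p, q) :: L, ?_, ?_, ?_⟩
      · simp [hLlen, DTree.height, Nat.max_eq_right (le_of_not_ge hcase)]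
      · refine List.nodup_cons.mpr ⟨?_, hLnd⟩
        intro hin
        obtain ⟨s, hswf, hsroot, hsg, hslen⟩ := hLmem _ hin
        obtain ⟨w', hw', hlen⟩ := hctx s hswf hsroot hsg
        have := hmin w' hw'
        rw [hylen] at hk
        omega
      · rintro x hx
        rcases List.mem_cons.mp hx with h | h
        · subst h
          exact ⟨DTree.node A l r, ⟨hbin, hwl, hwr⟩, rfl,
            (gword_append δ l.yield r.yield p q).mpr ⟨m, hgl, hgr⟩, le_refl _⟩
        · obtain ⟨s, h1, h2, h3, h4⟩ := hLmem _ h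
          exact ⟨s, h1, h2, h3, by rw [hylen]; omega⟩

theorem parse_tree_height_of_shortest_word {T N Q : Type} [Fintype N] [Fintype Q]
    (g : CNF T N) (δ : Q → T → Q → Prop) (w : List T)
    (hw : w ∈ g.Lang ∩ GraphLang δ)
    (hmin : ∀ w' ∈ g.Lang ∩ GraphLang δ, w.length ≤ w'.length)
    (t : DTree T N) (hwf : t.wf g) (hroot : t.rootN = g.start) (hyield : t.yield = w) :
    t.height ≤ Fintype.card N * (Fintype.card Q) ^ 2 := by
  classical
  obtain ⟨hlang, i, j, hpath⟩ := hw
  have hg : GWord δ i t.yield j := by rw [hyield]; exact hpath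
  have hctx : ∀ s' : DTree T N, s'.wf g → s'.rootN = t.rootN → GWord δ i s'.yield j →
      ∃ w' ∈ g.Lang ∩ GraphLang δ, w'.length = 0 + s'.yield.length := by
    intro s' h1 h2 h3
    exact ⟨s'.yield, ⟨⟨s', h1, by rw [h2, hroot], rfl⟩, ⟨i, j, h3⟩⟩, by omega⟩
  obtain ⟨L, hLlen, hLnd, _⟩ := key_lemma g δ w hmin t i j hwf hg 0
    (by rw [hyield]; omega) hctx
  have hcard : L.length ≤ Fintype.card (N × Q × Q) := hLnd.length_le_card
  have : Fintype.card (N × Q × Q) = Fintype.card N * (Fintype.card Q) ^ 2 := by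
    simp [Fintype.card_prod, sq, mul_assoc]
  omega
end

section
/- Let G be a context-free grammar in Chomsky normal form and D a directed labeled graph with node set V. In the Bar-Hillel product grammar G' with nonterminals (A,i,j) ∈ N × V × V, a triple (A,i,j) derives a terminal word w in G' if and only if A derives w in G and there is a path from i to j in D labeled by w. -/
/-- The Bar-Hillel product of a CNF grammar and a directed labeled graph,
with a chosen start triple. Nonterminals are triples `(A, i, j)`;
rules are `(A,i,j) → (B,i,k)(C,k,j)` for `A → BC`, and `(A,i,j) → a`
whenever `A → a` and `(i, a, j)` is an edge. -/
def barHillel {T N Q : Type} (g : CNF T N) (δ : Q → T → Q → Prop)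
    (s : N × Q × Q) : CNF T (N × Q × Q) where
  start := s
  binRule := fun x y z =>
    g.binRule x.1 y.1 z.1 ∧ y.2.1 = x.2.1 ∧ y.2.2 = z.2.1 ∧ z.2.2 = x.2.2
  termRule := fun x a => g.termRule x.1 a ∧ δ x.2.1 a x.2.2

lemma GWord.append {Q T : Type} {δ : Q → T → Q → Prop} :
    ∀ {u v : List T} {i k j : Q}, GWord δ i u k → GWord δ k v j →
      GWord δ i (u ++ v) j := by
  intro u
  induction u with
  | nil => intro v i k j h1 h2; cases h1; exact h2
  | cons a u ih =>
    rintro v i k j ⟨m, hm, hw⟩ h2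
    exact ⟨m, hm, ih hw h2⟩

lemma GWord.split {Q T : Type} {δ : Q → T → Q → Prop} :
    ∀ {u v : List T} {i j : Q}, GWord δ i (u ++ v) j →
      ∃ k, GWord δ i u k ∧ GWord δ k v j := by
  intro u
  induction u with
  | nil => intro v i j h; exact ⟨i, rfl, h⟩
  | cons a u ih =>
    rintro v i j ⟨m, hm, hw⟩
    obtain ⟨k, h1, h2⟩ := ih hw
    exact ⟨k, ⟨m, hm, h1⟩, h2⟩

/-- Project a product parse tree to a parse tree of the original grammar. -/
def DTree.proj {T N Q : Type} : DTree T (N × Q × Q) → DTree T N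
  | .leaf x a => .leaf x.1 a
  | .node x l r => .node x.1 l.proj r.proj

lemma barHillel_forward {T N Q : Type} {g : CNF T N} {δ : Q → T → Q → Prop}
    {s : N × Q × Q} :
    ∀ t : DTree T (N × Q × Q), t.wf (barHillel g δ s) →
      t.proj.wf g ∧ t.proj.rootN = t.rootN.1 ∧ t.proj.yield = t.yield ∧
        GWord δ t.rootN.2.1 t.yield t.rootN.2.2 := by
  intro t
  induction t with
  | leaf x a =>
    rintro ⟨h1, h2⟩
    exact ⟨h1, rfl, rfl, x.2.2, h2, rfl⟩
  | node x l r ihl ihr =>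
    rintro ⟨⟨hb, e1, e2, e3⟩, hl, hr⟩
    obtain ⟨wl, rl, yl, pl⟩ := ihl hl
    obtain ⟨wr, rr, yr, pr⟩ := ihr hr
    refine ⟨⟨?_, wl, wr⟩, rfl, by simp [DTree.proj, DTree.yield, yl, yr], ?_⟩
    · rw [rl, rr]; exact hb
    · show GWord δ x.2.1 (l.yield ++ r.yield) x.2.2
      rw [← e1, ← e3]
      exact GWord.append pl (e2 ▸ pr)

lemma barHillel_backward {T N Q : Type} {g : CNF T N} {δ : Q → T → Q → Prop}
    {s : N × Q × Q} :
    ∀ t : DTree T N, t.wf g → ∀ i j : Q, GWord δ i t.yield j →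
      ∃ t' : DTree T (N × Q × Q), t'.wf (barHillel g δ s) ∧
        t'.rootN = (t.rootN, i, j) ∧ t'.yield = t.yield := by
  intro t
  induction t with
  | leaf A a =>
    rintro h i j ⟨k, hk, hkj⟩
    cases hkj
    exact ⟨.leaf (A, i, j) a, ⟨h, hk⟩, rfl, rfl⟩
  | node A l r ihl ihr =>
    rintro ⟨hb, hl, hr⟩ i j hp
    obtain ⟨k, p1, p2⟩ := GWord.split hp
    obtain ⟨tl, wl, rl, yl⟩ := ihl hl i k p1
    obtain ⟨tr, wr, rr, yr⟩ := ihr hr k j p2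
    refine ⟨.node (A, i, j) tl tr, ⟨?_, wl, wr⟩, rfl, ?_⟩
    · rw [rl, rr]; exact ⟨hb, rfl, rfl, rfl⟩
    · show tl.yield ++ tr.yield = l.yield ++ r.yield
      rw [yl, yr]

theorem barHillel_derives_iff {T N Q : Type} (g : CNF T N) (δ : Q → T → Q → Prop)
    (s : N × Q × Q) (A : N) (i j : Q) (w : List T) :
    (barHillel g δ s).Derives (A, i, j) w ↔ g.Derives A w ∧ GWord δ i w j := by
  constructor
  · rintro ⟨t, hwf, hroot, hyield⟩
    obtain ⟨w1, r1, y1, p1⟩ := barHillel_forward t hwf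
    subst hyield
    exact ⟨⟨t.proj, w1, by rw [r1, hroot], y1⟩, by rw [hroot] at p1; exact p1⟩
  · rintro ⟨⟨t, hwf, hroot, hyield⟩, hp⟩
    obtain ⟨t', w', r', y'⟩ := barHillel_backward (s := s) t hwf i j (hyield ▸ hp)
    exact ⟨t', w', by rw [r', hroot], y'.trans hyield⟩
end
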